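/- arXiv:2110.14676 — 2 statements merged into one kernel-verified Lean document; each statement's English description precedes it below -/
import Mathlib

section
/- The space of lower-p filtrations on a finite abstract simplicial complex K is closed under the relation ~: if f is a lower-p filtration and f ~ g, then g is a lower-p filtration. In particular, lower-star filtrations (p = 0) and lower-edge filtrations (p = 1) are closed under ~. -/
/-- `K` is a finite abstract simplicial complex: a finite family of nonempty finite
sets closed under taking nonempty subsets. -/
def IsComplex {V : Type*} [DecidableEq V] (K : Finset (Finset V)) : Prop :=
  (∀ τ ∈ K, τ.Nonempty) ∧ ∀ τ ∈ K, ∀ σ : Finset V, σ ⊆ τ → σ.Nonempty → σ ∈ K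

/-- `f` is a lower-`p` filtration on `K`: for every simplex `τ ∈ K`, `f τ` is the
maximum of `f σ` over faces `σ ⊆ τ` with `dim σ ≤ p` (i.e. `σ.card ≤ p + 1`). -/
def IsLowerP {V : Type*} [DecidableEq V] (K : Finset (Finset V)) (p : ℕ)
    (f : Finset V → ℝ) : Prop :=
  ∀ τ ∈ K, IsGreatest {x | ∃ σ ∈ K, σ ⊆ τ ∧ σ.card ≤ p + 1 ∧ f σ = x} (f τ)

/-- Lower-`p` filtrations are closed under the relation `~`: if `f` is a lower-`p`
filtration and `f ~ g`, then `g` is a lower-`p` filtration. (In particular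
lower-star (`p = 0`) and lower-edge (`p = 1`) filtrations are closed under `~`.) -/
theorem stmt7 (V : Type) [DecidableEq V] (K : Finset (Finset V)) (hK : IsComplex K)
    (p : ℕ) (S : Set ℝ) (f g : Finset V → ℝ) (hf : IsLowerP K p f)
    (hrel : ∀ τ ∈ K, ∀ τ' ∈ K, (f τ ∈ S → g τ = f τ) ∧ (f τ ≤ f τ' → g τ ≤ g τ')) :
    IsLowerP K p g := by
  intro τ hτ
  obtain ⟨⟨σ₀, hσ₀K, hσ₀τ, hσ₀c, hσ₀f⟩, hub⟩ := hf τ hτ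
  have h1 : g σ₀ ≤ g τ := (hrel σ₀ hσ₀K τ hτ).2 (le_of_eq hσ₀f)
  have h2 : g τ ≤ g σ₀ := (hrel τ hτ σ₀ hσ₀K).2 (le_of_eq hσ₀f.symm)
  constructor
  · exact ⟨σ₀, hσ₀K, hσ₀τ, hσ₀c, le_antisymm h1 h2⟩
  · rintro x ⟨σ, hσK, hστ, hσc, rfl⟩
    exact (hrel σ hσK τ hτ).2 (hub ⟨σ, hσK, hστ, hσc, rfl⟩)
end

section
/- The persistence map is equivariant under monotone reparametrization: for any filter f on a finite based chain complex and any non-decreasing map ψ : ℝ → ℝ, the barcode of ψ ∘ f equals ψ applied to the barcode of f, where ψ acts on intervals by (b,d) ↦ (ψ(b), ψ(d)), discarding intervals with ψ(b) = ψ(d), and ψ(∞) = ∞. -/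
noncomputable section
open scoped Classical

/-- The subspace of chains spanned by the basis elements in `s`. -/
def chainSpan (𝕜 : Type*) [Field 𝕜] {E : Type*} [Fintype E] [DecidableEq E]
    (s : Set E) : Submodule 𝕜 (E → 𝕜) :=
  Submodule.span 𝕜 ((fun e => Pi.single e (1 : 𝕜)) '' s)

/-- Chains supported on the closed sublevel set `{f ≤ t}`. -/
def FLe (𝕜 : Type*) [Field 𝕜] {E : Type*} [Fintype E] [DecidableEq E]
    (f : E → ℝ) (t : ℝ) : Submodule 𝕜 (E → 𝕜) :=
  chainSpan 𝕜 {e | f e ≤ t}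

/-- Chains supported on the open sublevel set `{f < t}`. -/
def FLt (𝕜 : Type*) [Field 𝕜] {E : Type*} [Fintype E] [DecidableEq E]
    (f : E → ℝ) (t : ℝ) : Submodule 𝕜 (E → 𝕜) :=
  chainSpan 𝕜 {e | f e < t}

/-- Rank of the persistence map: dimension of the image of the degree-`p` cycles
supported on `A` in the quotient by the boundaries `bd(B)`. -/
def persRankR {𝕜 : Type*} [Field 𝕜] {E : Type*} [Fintype E] [DecidableEq E]
    (bd : (E → 𝕜) →ₗ[𝕜] (E → 𝕜)) (deg : E → ℕ) (p : ℕ)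
    (A B : Submodule 𝕜 (E → 𝕜)) : ℕ :=
  Module.finrank 𝕜
    ((LinearMap.ker bd ⊓ chainSpan 𝕜 {e | deg e = p} ⊓ A).map
      (Submodule.mkQ (Submodule.map bd B)))

/-- Multiplicity of the bounded interval `(b, d)` in the degree-`p` barcode of `f`. -/
def multFinR {𝕜 : Type*} [Field 𝕜] {E : Type*} [Fintype E] [DecidableEq E]
    (bd : (E → 𝕜) →ₗ[𝕜] (E → 𝕜)) (deg : E → ℕ) (f : E → ℝ) (p : ℕ) (b d : ℝ) : ℤ :=
  (persRankR bd deg p (FLe 𝕜 f b) (FLt 𝕜 f d) : ℤ)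
    - persRankR bd deg p (FLt 𝕜 f b) (FLt 𝕜 f d)
    - persRankR bd deg p (FLe 𝕜 f b) (FLe 𝕜 f d)
    + persRankR bd deg p (FLt 𝕜 f b) (FLe 𝕜 f d)

/-- Multiplicity of the infinite interval `(b, ∞)` in the degree-`p` barcode of `f`. -/
def multInfR {𝕜 : Type*} [Field 𝕜] {E : Type*} [Fintype E] [DecidableEq E]
    (bd : (E → 𝕜) →ₗ[𝕜] (E → 𝕜)) (deg : E → ℕ) (f : E → ℝ) (p : ℕ) (b : ℝ) : ℤ :=
  (persRankR bd deg p (FLe 𝕜 f b) ⊤ : ℤ) - persRankR bd deg p (FLt 𝕜 f b) ⊤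


/-!
Both multiplicities are iterated differences `H {f ≤ t} - H {f < t}` of a rank function `H` of
sublevel sets. For monotone `ψ`, the sets `{ψ ∘ f < b} ⊆ {ψ ∘ f ≤ b}` are sublevel sets of `f`,
and the critical values `t₁ < ⋯ < tₙ` of `f` with `ψ tᵢ = b` fill the gap between them, with
`{f ≤ tᵢ} = {f < tᵢ₊₁}`. So the difference for `ψ ∘ f` at `b` telescopes into the sum of the
differences for `f` at the `tᵢ`; for bars this is done in each endpoint separately.
-/

open Finset

section Sublevel

variable {E G : Type*} [AddCommGroup G]

def sublevelJump (f : E → ℝ) (H : Set E → G) (t : ℝ) : G :=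
  H (f ⁻¹' Set.Iic t) - H (f ⁻¹' Set.Iio t)

theorem sublevelJump_comm (f g : E → ℝ) (Φ : Set E → Set E → G) (t u : ℝ) :
    sublevelJump f (fun s => sublevelJump g (Φ s) u) t =
      sublevelJump g (fun s' => sublevelJump f (fun s => Φ s s') t) u := by
  simp only [sublevelJump]
  abel

theorem sum_sublevelJump_eq_of_isLowerSet [DecidableEq ℝ] (f : E → ℝ) (H : Set E → G)
    (W : Finset ℝ) {D D' : Set ℝ} (hD : IsLowerSet D) (hD' : IsLowerSet D') (hDD' : D ⊆ D')
    (hW : ∀ x ∈ W, x ∈ D' \ D) (hf : ∀ e, f e ∈ D' \ D → f e ∈ W) :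
    ∑ x ∈ W, sublevelJump f H x = H (f ⁻¹' D') - H (f ⁻¹' D) := by
  induction W using Finset.induction_on_max generalizing D' with
  | empty =>
    have : f ⁻¹' D' = f ⁻¹' D :=
      Set.ext fun e => ⟨fun he => by_contra fun he' => by simpa using hf e ⟨he, he'⟩,
        fun he => hDD' he⟩
    rw [this, sum_empty, sub_self]
  | insert a W haW ih =>
    obtain ⟨haD', haD⟩ := hW a (mem_insert_self a W)
    have hDa : D ⊆ Set.Iio a := fun x hx => lt_of_not_ge fun hax => haD (hD hax hx)
    have hIic : f ⁻¹' D' = f ⁻¹' Set.Iic a := by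
      ext e
      refine ⟨fun he => ?_, fun he => hD' he haD'⟩
      by_cases heD : f e ∈ D
      · exact Set.mem_Iic.2 (Set.mem_Iio.1 (hDa heD)).le
      · rcases mem_insert.1 (hf e ⟨he, heD⟩) with h | h
        exacts [h.le, (haW _ h).le]
    have hIio : f ⁻¹' (D' ∩ Set.Iio a) = f ⁻¹' Set.Iio a := by
      rw [Set.preimage_inter, hIic,
        Set.inter_eq_right.2 (Set.preimage_mono Set.Iio_subset_Iic_self)]
    have hrest := ih (hD'.inter (isLowerSet_Iio a)) (Set.subset_inter hDD' hDa)
      (fun x hx => ⟨⟨(hW x (mem_insert_of_mem hx)).1, haW x hx⟩, (hW x (mem_insert_of_mem hx)).2⟩)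
      (fun e ⟨⟨he, hea⟩, heD⟩ => (mem_insert.1 (hf e ⟨he, heD⟩)).resolve_left hea.ne)
    rw [sum_insert fun h => (haW a h).false, hrest, hIio, hIic, sublevelJump]
    abel

variable [Fintype E]

theorem sum_ite_sublevelJump_eq_comp (f : E → ℝ) {ψ : ℝ → ℝ} (hψ : Monotone ψ)
    (H : Set E → G) (b : ℝ) :
    ∑ x ∈ univ.image f, (if ψ x = b then sublevelJump f H x else 0) =
      sublevelJump (ψ ∘ f) H b := by
  rw [← sum_filter]
  exact sum_sublevelJump_eq_of_isLowerSet f H _ (D := {t | ψ t < b}) (D' := {t | ψ t ≤ b})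
    (fun _ _ hyx hx => (hψ hyx).trans_lt hx) (fun _ _ hyx hx => (hψ hyx).trans hx)
    (fun t (ht : ψ t < b) => show ψ t ≤ b from ht.le)
    (fun x hx => by simp_all [(mem_filter.1 hx).2])
    (fun e he => mem_filter.2 ⟨mem_image_of_mem f (mem_univ e), he.1.antisymm (not_lt.1 he.2)⟩)

theorem sum_sum_ite_sublevelJump_eq_comp (f : E → ℝ) {ψ : ℝ → ℝ} (hψ : Monotone ψ)
    (Φ : Set E → Set E → G) (b d : ℝ) :
    ∑ b₀ ∈ univ.image f, ∑ d₀ ∈ univ.image f,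
        (if ψ b₀ = b ∧ ψ d₀ = d then sublevelJump f (fun s => sublevelJump f (Φ s) d₀) b₀
          else 0) =
      sublevelJump (ψ ∘ f) (fun s => sublevelJump (ψ ∘ f) (Φ s) d) b := by
  have inner : ∀ b₀, ∑ d₀ ∈ univ.image f,
      (if ψ d₀ = d then sublevelJump f (fun s => sublevelJump f (Φ s) d₀) b₀ else 0) =
        sublevelJump f (fun s => sublevelJump (ψ ∘ f) (Φ s) d) b₀ := by
    intro b₀
    simp only [sublevelJump_comm f f Φ b₀]
    rw [sum_ite_sublevelJump_eq_comp f hψ, sublevelJump_comm]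
  rw [← sum_ite_sublevelJump_eq_comp f hψ]
  refine sum_congr rfl fun b₀ _ => ?_
  rw [← inner]
  split_ifs with h <;> simp only [h, ite_and, if_true, if_false, sum_const_zero]

end Sublevel

section Persistence

variable {𝕜 : Type*} [Field 𝕜] {E : Type*} [Fintype E] [DecidableEq E]
  (bd : (E → 𝕜) →ₗ[𝕜] (E → 𝕜)) (deg : E → ℕ) (f : E → ℝ) (p : ℕ)

theorem multInfR_eq_sublevelJump (b : ℝ) :
    multInfR bd deg f p b =
      sublevelJump f (fun s => (persRankR bd deg p (chainSpan 𝕜 s) ⊤ : ℤ)) b :=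
  rfl

theorem multFinR_eq_sublevelJump (b d : ℝ) :
    multFinR bd deg f p b d =
      sublevelJump f (fun s => sublevelJump f
        (fun s' => -(persRankR bd deg p (chainSpan 𝕜 s) (chainSpan 𝕜 s') : ℤ)) d) b := by
  simp only [multFinR, sublevelJump, FLe, FLt, Set.preimage, Set.mem_Iic, Set.mem_Iio]
  ring

end Persistence

theorem stmt16_general (E : Type) [Fintype E] [DecidableEq E] (𝕜 : Type) [Field 𝕜]
    (bd : (E → 𝕜) →ₗ[𝕜] (E → 𝕜)) (deg : E → ℕ)
    (f : E → ℝ)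
    (ψ : ℝ → ℝ) (hψ : Monotone ψ) :
    (∀ p : ℕ, ∀ b d : ℝ, b < d →
      multFinR bd deg (ψ ∘ f) p b d =
        ∑ b₀ ∈ Finset.univ.image f, ∑ d₀ ∈ Finset.univ.image f,
          if ψ b₀ = b ∧ ψ d₀ = d ∧ b₀ < d₀ then multFinR bd deg f p b₀ d₀ else 0) ∧
    (∀ p : ℕ, ∀ b : ℝ,
      multInfR bd deg (ψ ∘ f) p b =
        ∑ b₀ ∈ Finset.univ.image f,
          if ψ b₀ = b then multInfR bd deg f p b₀ else 0) := by
  refine ⟨fun p b d hbd => ?_, fun p b => ?_⟩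
  · have hlt : ∀ b₀ d₀, ψ b₀ = b → ψ d₀ = d → b₀ < d₀ := fun b₀ d₀ hb hd =>
      lt_of_not_ge fun h => (hψ h).not_gt (hb ▸ hd ▸ hbd)
    simp only [multFinR_eq_sublevelJump]
    rw [← sum_sum_ite_sublevelJump_eq_comp f hψ]
    refine sum_congr rfl fun b₀ _ => sum_congr rfl fun d₀ _ => if_congr ?_ rfl rfl
    exact ⟨fun h => ⟨h.1, h.2, hlt b₀ d₀ h.1 h.2⟩, fun h => ⟨h.1, h.2.1⟩⟩
  · simp only [multInfR_eq_sublevelJump]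
    exact (sum_ite_sublevelJump_eq_comp f hψ _ b).symm

/-- Equivariance of the persistence map under monotone reparametrization: the
barcode of `ψ ∘ f` is obtained from the barcode of `f` by applying `ψ` to interval
endpoints, discarding intervals with `ψ b = ψ d`, and fixing `∞`. -/
theorem stmt16 (E : Type) [Fintype E] [DecidableEq E] (𝕜 : Type) [Field 𝕜]
    (bd : (E → 𝕜) →ₗ[𝕜] (E → 𝕜)) (hbd : bd ∘ₗ bd = 0) (deg : E → ℕ)
    (hdeg : ∀ e e' : E, bd (Pi.single e 1) e' ≠ 0 → deg e' + 1 = deg e)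
    (f : E → ℝ) (hfilt : ∀ t : ℝ, Submodule.map bd (FLe 𝕜 f t) ≤ FLe 𝕜 f t)
    (ψ : ℝ → ℝ) (hψ : Monotone ψ) :
    (∀ p : ℕ, ∀ b d : ℝ, b < d →
      multFinR bd deg (ψ ∘ f) p b d =
        ∑ b₀ ∈ Finset.univ.image f, ∑ d₀ ∈ Finset.univ.image f,
          if ψ b₀ = b ∧ ψ d₀ = d ∧ b₀ < d₀ then multFinR bd deg f p b₀ d₀ else 0) ∧
    (∀ p : ℕ, ∀ b : ℝ,
      multInfR bd deg (ψ ∘ f) p b =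
        ∑ b₀ ∈ Finset.univ.image f,
          if ψ b₀ = b then multInfR bd deg f p b₀ else 0) :=
  stmt16_general E 𝕜 bd deg f ψ hψ
end
end
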